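/- Let F be a local field with ring of integers 𝔬, maximal ideal 𝔭, uniformizer ϖ, ℓ ≥ 1, a ∈ F^×, y ∈ F^{ℓ−1}. Let M = ĉ·x̄(y)·j_{1,ℓ}(diag(a,a⁻¹))·δ₀·ω' be the matrix with blocks (0 0 0 0 a; 0 −I_{ℓ−1} 0 0 −ay; 0 0 −1 0 0; 0 0 0 −I_{ℓ−1} 0; a⁻¹ 0 0 y' 0). Suppose M = u·g_χ·k where u is upper unitriangular, g_χ = (0 0 ϖ⁻¹; 0 −I_{2ℓ−1} 0; ϖ 0 0) in block form, and k has all entries in 𝔬 with (1,1) entry in 1 + 𝔭. Then a⁻¹ ∈ ϖ·(1+𝔭) and every entry of y lies in 𝔭. -/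

import Mathlib

open Matrix

/-- The block matrix `g_χ = (0 0 ϖ⁻¹; 0 −I_{2ℓ−1} 0; ϖ 0 0)`. -/
def gchiSO (F : Type*) [Field F] (l : ℕ) (ϖ : F) :
    Matrix (Fin (2 * l + 1)) (Fin (2 * l + 1)) F :=
  fun i j =>
    if (i : ℕ) = 0 ∧ (j : ℕ) = 2 * l then ϖ⁻¹
    else if (i : ℕ) = 2 * l ∧ (j : ℕ) = 0 then ϖ
    else if i = j ∧ 1 ≤ (i : ℕ) ∧ (i : ℕ) ≤ 2 * l - 1 then -1
    else 0

/-- The explicit matrix `M = ĉ·x̄(y)·j_{1,ℓ}(diag(a,a⁻¹))·δ₀·ω'` with blocks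
`(0 0 0 0 a; 0 −I_{ℓ−1} 0 0 −ay; 0 0 −1 0 0; 0 0 0 −I_{ℓ−1} 0; a⁻¹ 0 0 y' 0)`. -/
def M9 (F : Type*) [Field F] (l : ℕ) (a : F) (y : Fin (l - 1) → F) :
    Matrix (Fin (2 * l + 1)) (Fin (2 * l + 1)) F :=
  fun i j =>
    if (i : ℕ) = 0 ∧ (j : ℕ) = 2 * l then a
    else if h : (j : ℕ) = 2 * l ∧ 1 ≤ (i : ℕ) ∧ (i : ℕ) ≤ l - 1 then
      -(a * y ⟨(i : ℕ) - 1, by omega⟩)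
    else if (i : ℕ) = 2 * l ∧ (j : ℕ) = 0 then a⁻¹
    else if h' : (i : ℕ) = 2 * l ∧ l + 1 ≤ (j : ℕ) ∧ (j : ℕ) ≤ 2 * l - 1 then
      -y ⟨2 * l - 1 - (j : ℕ), by omega⟩
    else if i = j ∧ 1 ≤ (i : ℕ) ∧ (i : ℕ) ≤ 2 * l - 1 then -1
    else 0

/-- An element of `F` belongs to the maximal ideal `𝔭` of the valuation ring `O`. -/
def memP {F : Type*} [Field F] (O : ValuationSubring F) (x : F) : Prop :=
  ∃ p : O, p ∈ IsLocalRing.maximalIdeal O ∧ (p : F) = x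

/-! The last row of an upper unitriangular `u` is the last unit vector, and the last row of
`g_χ` is `ϖ` times the first unit vector, so the last row of `M = u·g_χ·k` is `ϖ` times the
first row of `k`. Its entries `a⁻¹` and `-y` are therefore `ϖ·k₁₁` and `ϖ·(integral)`. -/

theorem mul_apply_last_of_upperTriangular {R ι : Type*} [NonAssocSemiring R] {n : ℕ}
    (u : Matrix (Fin (n + 1)) (Fin (n + 1)) R) (A : Matrix (Fin (n + 1)) ι R)
    (hu : ∀ i j : Fin (n + 1), (j : ℕ) < i → u i j = 0) (hlast : u (Fin.last n) (Fin.last n) = 1)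
    (j : ι) : (u * A) (Fin.last n) j = A (Fin.last n) j := by
  rw [mul_apply, Finset.sum_eq_single (Fin.last n) _ (by simp), hlast, one_mul]
  intro b _ hb
  rw [hu _ _ (Fin.lt_last_iff_ne_last.2 hb), zero_mul]

section

variable {F : Type*} [Field F] {l : ℕ}

theorem gchiSO_apply_last (hl : 1 ≤ l) (ϖ : F) (m : Fin (2 * l + 1)) :
    gchiSO F l ϖ (Fin.last (2 * l)) m = if (m : ℕ) = 0 then ϖ else 0 := by
  simp only [gchiSO, Fin.val_last, Fin.ext_iff, true_and]
  split_ifs <;> first | rfl | omega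

theorem gchiSO_mul_apply_last (hl : 1 ≤ l) (ϖ : F)
    (k : Matrix (Fin (2 * l + 1)) (Fin (2 * l + 1)) F) (j : Fin (2 * l + 1)) :
    (gchiSO F l ϖ * k) (Fin.last (2 * l)) j = ϖ * k 0 j := by
  simp only [mul_apply, gchiSO_apply_last hl, ite_mul, zero_mul, Fin.val_eq_zero_iff,
    Finset.sum_ite_eq', Finset.mem_univ, if_true]

theorem M9_apply_last_zero (hl : 1 ≤ l) (a : F) (y : Fin (l - 1) → F) :
    M9 F l a y (Fin.last (2 * l)) 0 = a⁻¹ := by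
  simp only [M9, Fin.val_last, Fin.val_zero, Fin.ext_iff, true_and]
  split_ifs <;> first | rfl | omega

theorem M9_apply_last_dual (a : F) (y : Fin (l - 1) → F) (i : Fin (l - 1)) :
    M9 F l a y (Fin.last (2 * l)) ⟨2 * l - 1 - i, by omega⟩ = -y i := by
  simp only [M9, Fin.val_last, Fin.ext_iff, true_and]
  split_ifs <;> first | omega | exact congrArg (fun t => -y t) (Fin.ext (by dsimp only; omega))

theorem memP_of_span_eq {O : ValuationSubring F} {ϖ : F} (hϖO : ϖ ∈ O)
    (hϖgen : Ideal.span {(⟨ϖ, hϖO⟩ : O)} = IsLocalRing.maximalIdeal O) : memP O ϖ :=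
  ⟨_, hϖgen ▸ Ideal.mem_span_singleton_self _, rfl⟩

theorem memP.mul_mem {O : ValuationSubring F} {x z : F} (hx : memP O x) (hz : z ∈ O) :
    memP O (x * z) := by
  obtain ⟨p, hp, rfl⟩ := hx
  exact ⟨p * ⟨z, hz⟩, Ideal.mul_mem_right _ _ hp, rfl⟩

end

/-- (Lemma 7.1.)  If `M = u·g_χ·k` with `u` upper unitriangular and `k` integral with
`(1,1)` entry in `1 + 𝔭`, then `a⁻¹ ∈ ϖ·(1 + 𝔭)` and every entry of `y` lies in `𝔭`. -/
theorem stmt12 (F : Type*) [Field F] (O : ValuationSubring F)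
    (ϖ : F) (hϖO : ϖ ∈ O)
    (hϖgen : Ideal.span {(⟨ϖ, hϖO⟩ : O)} = IsLocalRing.maximalIdeal O)
    (l : ℕ) (hl : 1 ≤ l) (a : F) (y : Fin (l - 1) → F)
    (u k : Matrix (Fin (2 * l + 1)) (Fin (2 * l + 1)) F)
    (hu_upper : ∀ i j : Fin (2 * l + 1), (j : ℕ) < (i : ℕ) → u i j = 0)
    (hu_diag : ∀ i : Fin (2 * l + 1), u i i = 1)
    (hk_int : ∀ i j : Fin (2 * l + 1), k i j ∈ O)
    (hk11 : memP O (k ⟨0, by omega⟩ ⟨0, by omega⟩ - 1))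
    (heq : M9 F l a y = u * gchiSO F l ϖ * k) :
    (∃ w : F, memP O (w - 1) ∧ a⁻¹ = ϖ * w) ∧ ∀ i, memP O (y i) := by
  have last_row : ∀ j, M9 F l a y (Fin.last (2 * l)) j = ϖ * k 0 j := fun j => by
    rw [heq, Matrix.mul_assoc, mul_apply_last_of_upperTriangular u _ hu_upper (hu_diag _),
      gchiSO_mul_apply_last hl]
  refine ⟨⟨k 0 0, hk11, ?_⟩, fun i => ?_⟩
  · rw [← M9_apply_last_zero hl a y, last_row]
  · have hyi := last_row ⟨2 * l - 1 - i, by omega⟩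
    rw [M9_apply_last_dual, neg_eq_iff_eq_neg, ← mul_neg] at hyi
    rw [hyi]
    exact (memP_of_span_eq hϖO hϖgen).mul_mem (O.neg_mem _ (hk_int _ _))
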